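/- For every n ≥ 1, letting T(n,j) denote the number of Dyck n-paths with exactly j returns, the sum over all k ≥ 0 of T(n,2k)+T(n,2k+1) equals C_n; moreover T(n,j) = (j/(2n−j))·binom(2n−j, n) for 1 ≤ j ≤ n. -/

import Mathlib

inductive Step : Type
  | U : Step
  | D : Step
deriving DecidableEq

open Step

/-- The path stays weakly above ground level: every prefix has at least as many `U`s as `D`s. -/
def NonnegPrefixes (p : List Step) : Prop :=
  ∀ q : List Step, q <+: p → q.count D ≤ q.count U

/-- A Dyck path: equally many upsteps and downsteps, never dipping below ground level. -/
def IsDyck (p : List Step) : Prop :=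
  p.count U = p.count D ∧ NonnegPrefixes p

/-- A Dyck `n`-path: a Dyck path with `n` upsteps (semilength `n`). -/
def IsDyckN (n : ℕ) (p : List Step) : Prop :=
  IsDyck p ∧ p.count U = n

/-- Length of the terminal descent (maximal final run of downsteps). -/
def termDesc (p : List Step) : ℕ :=
  (p.reverse.takeWhile (fun s => s == D)).length

/-- Number of returns: downsteps that bring the path back to ground level. -/
def returnCount (p : List Step) : ℕ :=
  ((List.range p.length).filter
    (fun i => (p.take (i+1)).count U == (p.take (i+1)).count D)).length

/-- `GroundDescent p q m r` : `p = q ++ D^m ++ r` is a maximal run of `m ≥ 1` downsteps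
ending at ground level. -/
def GroundDescent (p q : List Step) (m : ℕ) (r : List Step) : Prop :=
  p = q ++ List.replicate m D ++ r ∧ 1 ≤ m ∧
  q.getLast? ≠ some D ∧ r.head? ≠ some D ∧
  q.count U = q.count D + m

/-- All descents to ground level other than the terminal one have odd length. -/
def OddNonterminalGroundDescents (p : List Step) : Prop :=
  ∀ q m r, GroundDescent p q m r → r ≠ [] → Odd m

/-- No occurrence of `UD` starting at ground level. -/
def HillFree (p : List Step) : Prop :=
  ∀ q r : List Step, p = q ++ [U, D] ++ r → q.count U ≠ q.count D

/-- No occurrence of `UDU` starting at ground level. -/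
def EarlyHillFree (p : List Step) : Prop :=
  ∀ q r : List Step, p = q ++ [U, D, U] ++ r → q.count U ≠ q.count D

/-- Number of early hills: occurrences of `UDU` starting at ground level. -/
def earlyHillCount (p : List Step) : ℕ :=
  ((List.range p.length).filter
    (fun i => decide ((p.take i).count U = (p.take i).count D ∧
      (p.drop i).take 3 = [U, D, U]))).length

/-- `T n j` : the number of Dyck `n`-paths with exactly `j` returns. -/
noncomputable def T (n j : ℕ) : ℕ :=
  Nat.card {p : List Step // IsDyckN n p ∧ returnCount p = j}


namespace MyAux
open DyckWord List


def ret (p : DyckWord) : ℕ :=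
  if h : p = 0 then 0 else
    have := semilength_outsidePart_lt h
    ret p.outsidePart + 1
termination_by p.semilength

@[simp] lemma ret_zero : ret 0 = 0 := by rw [ret]; simp

lemma ret_of_ne {p : DyckWord} (h : p ≠ 0) : ret p = ret p.outsidePart + 1 := by
  rw [ret]; simp [h]

lemma ret_nest_add (q v : DyckWord) : ret (q.nest + v) = ret v + 1 := by
  have h : q.nest + v ≠ 0 := by
    intro hh
    rw [add_eq_zero'] at hh
    exact nest_ne_zero hh.1
  rw [ret_of_ne h, outsidePart_add nest_ne_zero, outsidePart_nest, zero_add]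

lemma ret_eq_zero_iff {p : DyckWord} : ret p = 0 ↔ p = 0 := by
  constructor
  · intro h
    by_contra hp
    rw [ret_of_ne hp] at h
    omega
  · rintro rfl; simp

lemma ret_le_semilength (p : DyckWord) : ret p ≤ p.semilength := by
  by_cases h : p = 0
  · subst h; simp
  · have h1 := semilength_outsidePart_lt h
    have := ret_le_semilength p.outsidePart
    rw [ret_of_ne h]
    omega
termination_by p.semilength

lemma semilength_eq_zero_iff {p : DyckWord} : p.semilength = 0 ↔ p = 0 := by
  constructor
  · intro h
    have := p.two_mul_semilength_eq_length
    rw [h, mul_zero] at this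
    rw [← toList_eq_nil, ← List.length_eq_zero_iff]
    omega
  · rintro rfl; simp

/-- number of Dyck words with given semilength and return count -/
noncomputable def N (m j : ℕ) : ℕ :=
  Nat.card {w : DyckWord // w.semilength = m ∧ ret w = j}

instance (m : ℕ) (P : DyckWord → Prop) :
    Finite {w : DyckWord // w.semilength = m ∧ P w} := by
  have hinj : Function.Injective
      (fun w : {w : DyckWord // w.semilength = m ∧ P w} =>
        (⟨w.1, w.2.1⟩ : {w : DyckWord // w.semilength = m})) := by
    intro a b hab
    simp only [Subtype.mk.injEq] at hab
    exact Subtype.ext hab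
  exact Finite.of_injective _ hinj

/-- E1 : add a hill in front. -/
noncomputable def E1 (m j : ℕ) :
    {v : DyckWord // v.semilength = m ∧ ret v = j} ≃
    {w : DyckWord // (w.semilength = m + 1 ∧ ret w = j + 1) ∧ w.insidePart = 0} where
  toFun v := ⟨(0 : DyckWord).nest + v.1, by
    refine ⟨⟨?_, ?_⟩, ?_⟩
    · simp [v.2.1, add_comm]
    · rw [ret_nest_add, v.2.2]
    · rw [insidePart_add nest_ne_zero, insidePart_nest]⟩
  invFun w := ⟨w.1.outsidePart, by
    have hs := w.2.1.1
    have hr := w.2.1.2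
    have hi := w.2.2
    have hw : w.1 ≠ 0 := by
      intro h; rw [h] at hr; simp at hr
    constructor
    · have h2 := semilength_insidePart_add_semilength_outsidePart_add_one hw
      rw [hi] at h2
      simp only [semilength_zero] at h2
      omega
    · rw [ret_of_ne hw] at hr
      omega⟩
  left_inv v := by
    ext1
    simp only
    rw [outsidePart_add nest_ne_zero, outsidePart_nest, zero_add]
  right_inv w := by
    have hr := w.2.1.2
    have hi := w.2.2
    have hw : w.1 ≠ 0 := by intro h; rw [h] at hr; simp at hr
    ext1
    simp only
    conv_rhs => rw [← nest_insidePart_add_outsidePart hw]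
    rw [hi]

/-- E2 : merge the first two arches into one. -/
noncomputable def E2 (m j : ℕ) :
    {w : DyckWord // (w.semilength = m ∧ ret w = j + 1) ∧ w.insidePart ≠ 0} ≃
    {w : DyckWord // w.semilength = m ∧ ret w = j + 2} where
  toFun w := ⟨w.1.insidePart.insidePart.nest +
      (w.1.insidePart.outsidePart.nest + w.1.outsidePart), by
    have hs := w.2.1.1
    have hr := w.2.1.2
    have hi := w.2.2
    have hw : w.1 ≠ 0 := by intro h; rw [h] at hi; simp at hi
    have hd := semilength_insidePart_add_semilength_outsidePart_add_one hw
    have hd2 := semilength_insidePart_add_semilength_outsidePart_add_one hi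
    constructor
    · simp only [semilength_add, semilength_nest]
      omega
    · rw [ret_nest_add, ret_nest_add]
      rw [ret_of_ne hw] at hr
      omega⟩
  invFun w := ⟨(w.1.insidePart.nest + w.1.outsidePart.insidePart).nest +
      w.1.outsidePart.outsidePart, by
    have hs := w.2.1
    have hr := w.2.2
    have hw : w.1 ≠ 0 := by intro h; rw [h] at hr; simp at hr
    have hq : w.1.outsidePart ≠ 0 := by
      intro h
      rw [ret_of_ne hw, h] at hr
      simp at hr
    have hd := semilength_insidePart_add_semilength_outsidePart_add_one hw
    have hd2 := semilength_insidePart_add_semilength_outsidePart_add_one hq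
    refine ⟨⟨?_, ?_⟩, ?_⟩
    · simp only [semilength_add, semilength_nest]
      omega
    · rw [ret_nest_add]
      rw [ret_of_ne hw, ret_of_ne hq] at hr
      omega
    · rw [insidePart_add nest_ne_zero, insidePart_nest]
      intro h
      rw [add_eq_zero'] at h
      exact nest_ne_zero h.1⟩
  left_inv w := by
    have hi := w.2.2
    have hw : w.1 ≠ 0 := by intro h; rw [h] at hi; simp at hi
    ext1
    simp only
    rw [insidePart_add nest_ne_zero, insidePart_nest,
      outsidePart_add nest_ne_zero, outsidePart_nest, zero_add,
      insidePart_add nest_ne_zero, insidePart_nest,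
      outsidePart_add nest_ne_zero, outsidePart_nest, zero_add,
      nest_insidePart_add_outsidePart hi,
      nest_insidePart_add_outsidePart hw]
  right_inv w := by
    have hr := w.2.2
    have hw : w.1 ≠ 0 := by intro h; rw [h] at hr; simp at hr
    have hq : w.1.outsidePart ≠ 0 := by
      intro h
      rw [ret_of_ne hw, h] at hr
      simp at hr
    ext1
    simp only
    rw [insidePart_add nest_ne_zero, insidePart_nest,
      outsidePart_add nest_ne_zero, outsidePart_nest, zero_add,
      insidePart_add nest_ne_zero, insidePart_nest,
      outsidePart_add nest_ne_zero, outsidePart_nest, zero_add,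
      nest_insidePart_add_outsidePart hq,
      nest_insidePart_add_outsidePart hw]

lemma card_split {α : Type*} (P Q : α → Prop) [Finite {x : α // P x}] :
    Nat.card {x : α // P x} =
      Nat.card {x : α // P x ∧ Q x} + Nat.card {x : α // P x ∧ ¬ Q x} := by
  classical
  have e1 : {x : α // P x ∧ Q x} ≃ {y : {x : α // P x} // Q y.1} :=
    (Equiv.subtypeSubtypeEquivSubtypeInter P Q).symm
  have e2 : {x : α // P x ∧ ¬ Q x} ≃ {y : {x : α // P x} // ¬ Q y.1} :=
    (Equiv.subtypeSubtypeEquivSubtypeInter P (fun x => ¬ Q x)).symm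
  have e3 : {y : {x : α // P x} // Q y.1} ⊕ {y : {x : α // P x} // ¬ Q y.1} ≃ {x : α // P x} :=
    Equiv.sumCompl _
  rw [← Nat.card_congr e3, Nat.card_sum, Nat.card_congr e1, Nat.card_congr e2]

lemma N_rec (m j : ℕ) : N (m + 1) (j + 1) = N m j + N (m + 1) (j + 2) := by
  rw [N, card_split (fun w : DyckWord => w.semilength = m + 1 ∧ ret w = j + 1)
    (fun w => w.insidePart = 0)]
  congr 1
  · exact Nat.card_congr (E1 m j).symm
  · rw [N]
    apply Nat.card_congr
    exact (Equiv.subtypeEquivRight (fun w => by tauto)).trans (E2 (m + 1) j)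

lemma N_eq_zero_of_lt {m j : ℕ} (h : m < j) : N m j = 0 := by
  rw [N, Nat.card_eq_zero]
  left
  constructor
  rintro ⟨w, hs, hr⟩
  have := ret_le_semilength w
  omega

lemma N_zero_right {m : ℕ} (h : 1 ≤ m) : N m 0 = 0 := by
  rw [N, Nat.card_eq_zero]
  left
  constructor
  rintro ⟨w, hs, hr⟩
  rw [ret_eq_zero_iff] at hr
  subst hr
  simp at hs
  omega

lemma N_zero_zero : N 0 0 = 1 := by
  rw [N, Nat.card_eq_one_iff_unique]
  constructor
  · constructor
    rintro ⟨a, ha, -⟩ ⟨b, hb, -⟩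
    rw [semilength_eq_zero_iff] at ha hb
    ext1
    show a = b
    rw [ha, hb]
  · exact ⟨⟨0, by simp⟩⟩

lemma N_diag (m : ℕ) : N m m = 1 := by
  induction m with
  | zero => exact N_zero_zero
  | succ k ih => rw [N_rec, ih, N_eq_zero_of_lt (by omega)]


lemma formula : ∀ s j : ℕ, (2 * s + j) * N (s + j) j = j * Nat.choose (2 * s + j) (s + j) := by
  intro s
  induction s with
  | zero =>
    intro j
    simp [N_diag, Nat.choose_self]
  | succ s ihs =>
    intro j
    induction j with
    | zero =>
      rw [N_zero_right (by omega)]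
      simp
    | succ j ihj =>
      set a := 2 * s + j + 2 with ha
      have eg1 : 2 * (s + 1) + (j + 1) = a + 1 := by omega
      have eg2 : s + 1 + (j + 1) = s + j + 2 := by omega
      rw [eg1, eg2]
      have hrec := N_rec (s + j + 1) j
      have er1 : s + j + 1 + 1 = s + j + 2 := by omega
      rw [er1] at hrec
      have h1 := ihj
      have e2 : 2 * (s + 1) + j = a := by omega
      have e3 : s + 1 + j = s + j + 1 := by omega
      rw [e2, e3] at h1
      have h2 := ihs (j + 2)
      have e4 : 2 * s + (j + 2) = a := by omega
      have e5 : s + (j + 2) = s + j + 2 := by omega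
      rw [e4, e5] at h2
      have hc : Nat.choose a (s + j + 2) * (s + j + 2) = Nat.choose a (s + j + 1) * (s + 1) := by
        have h := Nat.choose_succ_right_eq a (s + j + 1)
        have hsub : a - (s + j + 1) = s + 1 := by omega
        rw [hsub] at h
        have e6 : s + j + 1 + 1 = s + j + 2 := by omega
        rw [e6] at h
        exact h
      have hpascal : Nat.choose (a + 1) (s + j + 2) =
          Nat.choose a (s + j + 1) + Nat.choose a (s + j + 2) := by
        have h7 := Nat.choose_succ_succ a (s + j + 1)
        simp only [Nat.succ_eq_add_one] at h7
        have e6 : s + j + 1 + 1 = s + j + 2 := by omega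
        rw [e6] at h7
        exact h7
      rw [hrec, hpascal]
      have key : (a + 1) * (j * Nat.choose a (s + j + 1) + (j + 2) * Nat.choose a (s + j + 2)) =
          a * ((j + 1) * (Nat.choose a (s + j + 1) + Nat.choose a (s + j + 2))) := by
        have haz : (a : ℤ) = 2 * s + j + 2 := by omega
        zify at hc ⊢
        linear_combination (2 : ℤ) * hc + ((Nat.choose a (s + j + 2) : ℤ) - Nat.choose a (s + j + 1)) * haz
      apply Nat.eq_of_mul_eq_mul_left (show 0 < a by omega)
      calc a * ((a + 1) * (N (s + j + 1) j + N (s + j + 2) (j + 2)))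
          = (a + 1) * (a * N (s + j + 1) j + a * N (s + j + 2) (j + 2)) := by ring
        _ = (a + 1) * (j * Nat.choose a (s + j + 1) + (j + 2) * Nat.choose a (s + j + 2)) := by
            rw [h1, h2]
        _ = a * ((j + 1) * (Nat.choose a (s + j + 1) + Nat.choose a (s + j + 2))) := key


/-- list-level return count on DyckStep lists -/
def rc (l : List DyckStep) : ℕ :=
  ((List.range l.length).filter
    (fun i => (l.take (i+1)).count DyckStep.U == (l.take (i+1)).count DyckStep.D)).length

lemma rc_append {x y : List DyckStep} (hx : x.count DyckStep.U = x.count DyckStep.D) :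
    rc (x ++ y) = rc x + rc y := by
  unfold rc
  rw [length_append, List.range_add, filter_append, length_append]
  congr 1
  · apply congrArg length
    apply filter_congr
    intro i hi
    rw [mem_range] at hi
    rw [take_append_of_le_length (by omega)]
  · rw [← List.countP_eq_length_filter, ← List.countP_eq_length_filter, List.countP_map]
    apply List.countP_congr
    intro i hi
    rw [mem_range] at hi
    have hb : ((((x ++ y).take (x.length + i + 1)).count DyckStep.U ==
      ((x ++ y).take (x.length + i + 1)).count DyckStep.D)) =
      ((y.take (i+1)).count DyckStep.U == (y.take (i+1)).count DyckStep.D) := by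
      rw [List.take_append, take_of_length_le (by omega),
        show x.length + i + 1 - x.length = i + 1 by omega, count_append, count_append]
      apply Bool.eq_iff_iff.mpr
      simp only [beq_iff_eq]
      omega
    simp only [Function.comp_apply]
    rw [hb]

lemma rc_nest (p : DyckWord) : rc p.nest.toList = 1 := by
  have hl : p.nest.toList = [DyckStep.U] ++ p.toList ++ [DyckStep.D] := rfl
  unfold rc
  rw [hl]
  have hlen : ([DyckStep.U] ++ p.toList ++ [DyckStep.D]).length = p.toList.length + 2 := by
    simp
  rw [hlen, List.range_succ, filter_append, length_append]
  have h1 : ∀ i ∈ List.range (p.toList.length + 1),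
      ((([DyckStep.U] ++ p.toList ++ [DyckStep.D]).take (i+1)).count DyckStep.U ==
       (([DyckStep.U] ++ p.toList ++ [DyckStep.D]).take (i+1)).count DyckStep.D) = false := by
    intro i hi
    rw [mem_range] at hi
    rw [append_assoc, singleton_append, take_succ_cons,
      take_append_of_le_length (by omega)]
    have hle := p.count_D_le_count_U i
    apply Bool.eq_false_iff.mpr
    simp only [ne_eq, beq_iff_eq, count_cons]
    simp only [beq_self_eq_true, if_true, beq_iff_eq, reduceCtorEq, if_false]
    omega
  have h2 : ((([DyckStep.U] ++ p.toList ++ [DyckStep.D]).take (p.toList.length + 1 + 1)).count DyckStep.U ==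
       (([DyckStep.U] ++ p.toList ++ [DyckStep.D]).take (p.toList.length + 1 + 1)).count DyckStep.D) = true := by
    rw [take_of_length_le (by simp), ← hl]
    simp only [beq_iff_eq]
    exact p.nest.count_U_eq_count_D
  rw [filter_eq_nil_iff.mpr (by intro i hi; rw [h1 i hi]; simp), length_nil, zero_add]
  rw [List.filter_singleton, h2]
  rfl


lemma rc_toList (w : DyckWord) : rc w.toList = ret w := by
  by_cases h : w = 0
  · subst h
    rw [show (0 : DyckWord).toList = [] from rfl]
    simp [rc, ret_zero]
  · have hd := nest_insidePart_add_outsidePart h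
    have hsl := semilength_outsidePart_lt h
    have hlist : w.toList = w.insidePart.nest.toList ++ w.outsidePart.toList := by
      conv_lhs => rw [← hd]
      rfl
    rw [hlist, rc_append w.insidePart.nest.count_U_eq_count_D, rc_nest,
      rc_toList w.outsidePart, ret_of_ne h, add_comm]
termination_by w.semilength


def toDS : Step → DyckStep
  | Step.U => DyckStep.U
  | Step.D => DyckStep.D

def ofDS : DyckStep → Step
  | DyckStep.U => Step.U
  | DyckStep.D => Step.D

lemma toDS_inj : Function.Injective toDS := by
  intro a b h
  cases a <;> cases b <;> simp [toDS] at h ⊢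

lemma ofDS_inj : Function.Injective ofDS := by
  intro a b h
  cases a <;> cases b <;> simp [ofDS] at h ⊢

@[simp] lemma ofDS_toDS (s : Step) : ofDS (toDS s) = s := by cases s <;> rfl
@[simp] lemma toDS_ofDS (s : DyckStep) : toDS (ofDS s) = s := by cases s <;> rfl

lemma count_map_toDS_U (l : List Step) : (l.map toDS).count DyckStep.U = l.count Step.U :=
  List.count_map_of_injective l toDS toDS_inj Step.U

lemma count_map_toDS_D (l : List Step) : (l.map toDS).count DyckStep.D = l.count Step.D :=
  List.count_map_of_injective l toDS toDS_inj Step.D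

lemma count_map_ofDS_U (l : List DyckStep) : (l.map ofDS).count Step.U = l.count DyckStep.U :=
  List.count_map_of_injective l ofDS ofDS_inj DyckStep.U

lemma count_map_ofDS_D (l : List DyckStep) : (l.map ofDS).count Step.D = l.count DyckStep.D :=
  List.count_map_of_injective l ofDS ofDS_inj DyckStep.D

lemma returnCount_eq_rc (p : List Step) : returnCount p = rc (p.map toDS) := by
  unfold returnCount rc
  rw [length_map]
  apply congrArg length
  apply filter_congr
  intro i _
  rw [← List.map_take, count_map_toDS_U, count_map_toDS_D]

/-- Dyck word from a Dyck path. -/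
def toDW (p : List Step) (hp : IsDyck p) : DyckWord where
  toList := p.map toDS
  count_U_eq_count_D := by rw [count_map_toDS_U, count_map_toDS_D]; exact hp.1
  count_D_le_count_U i := by
    rw [← List.map_take, count_map_toDS_U, count_map_toDS_D]
    exact hp.2 _ (List.take_prefix i p)

lemma isDyck_ofDW (w : DyckWord) : IsDyck (w.toList.map ofDS) := by
  constructor
  · rw [count_map_ofDS_U, count_map_ofDS_D]
    exact w.count_U_eq_count_D
  · intro q hq
    rw [List.prefix_iff_eq_take] at hq
    rw [hq, ← List.map_take, count_map_ofDS_U, count_map_ofDS_D]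
    exact w.count_D_le_count_U _

/-- The key equivalence between Dyck paths with data and Dyck words with data. -/
noncomputable def pathEquiv (n j : ℕ) :
    {p : List Step // IsDyckN n p ∧ returnCount p = j} ≃
    {w : DyckWord // w.semilength = n ∧ ret w = j} where
  toFun p := ⟨toDW p.1 p.2.1.1, by
    constructor
    · show (p.1.map toDS).count DyckStep.U = n
      rw [count_map_toDS_U]
      exact p.2.1.2
    · rw [← rc_toList, show (toDW p.1 p.2.1.1).toList = p.1.map toDS from rfl,
        ← returnCount_eq_rc]
      exact p.2.2⟩
  invFun w := ⟨w.1.toList.map ofDS, by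
    refine ⟨⟨isDyck_ofDW w.1, ?_⟩, ?_⟩
    · rw [count_map_ofDS_U]
      exact w.2.1
    · rw [returnCount_eq_rc, List.map_map,
        show toDS ∘ ofDS = id from funext toDS_ofDS, List.map_id, rc_toList]
      exact w.2.2⟩
  left_inv p := by
    ext1
    show (p.1.map toDS).map ofDS = p.1
    rw [List.map_map, show ofDS ∘ toDS = id from funext ofDS_toDS, List.map_id]
  right_inv w := by
    ext1
    apply DyckWord.ext
    show (w.1.toList.map ofDS).map toDS = w.1.toList
    rw [List.map_map, show toDS ∘ ofDS = id from funext toDS_ofDS, List.map_id]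

lemma T_eq_N (n j : ℕ) : T n j = N n j := Nat.card_congr (pathEquiv n j)

lemma N_total (n : ℕ) : ∑ j ∈ Finset.range (n + 1), N n j = catalan n := by
  classical
  rw [← card_dyckWord_semilength_eq_catalan]
  have hcard : Fintype.card {w : DyckWord // w.semilength = n} =
      ∑ j ∈ Finset.range (n + 1),
        (Finset.univ.filter
          (fun x : {w : DyckWord // w.semilength = n} => ret x.1 = j)).card := by
    rw [← Finset.card_univ]
    apply Finset.card_eq_sum_card_fiberwise
    intro x _
    rw [Finset.mem_coe, Finset.mem_range]
    show ret x.1 < n + 1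
    have := ret_le_semilength x.1
    rw [x.2] at this
    omega
  rw [hcard]
  apply Finset.sum_congr rfl
  intro j _
  rw [← Fintype.card_subtype, ← Nat.card_eq_fintype_card, N]
  exact Nat.card_congr (Equiv.subtypeSubtypeEquivSubtypeInter _ _).symm

lemma sum_pairs (f : ℕ → ℕ) (M : ℕ) :
    ∑ k ∈ Finset.range M, (f (2 * k) + f (2 * k + 1)) = ∑ j ∈ Finset.range (2 * M), f j := by
  induction M with
  | zero => simp
  | succ m ih =>
    rw [Finset.sum_range_succ, ih, show 2 * (m + 1) = 2 * m + 1 + 1 by omega,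
      Finset.sum_range_succ, Finset.sum_range_succ]
    omega


end MyAux

open MyAux in
/-- For `n ≥ 1`, the sums `T(n,2k) + T(n,2k+1)` over all `k` add up to `C_n`; moreover
`T(n,j) = (j/(2n-j))·C(2n-j, n)` for `1 ≤ j ≤ n`. -/
theorem stmt13 (n : ℕ) (hn : 1 ≤ n) :
    (∑ k ∈ Finset.range (n + 1), (T n (2 * k) + T n (2 * k + 1))) = catalan n ∧
    ∀ j : ℕ, 1 ≤ j → j ≤ n →
      (2 * n - j) * T n j = j * Nat.choose (2 * n - j) n := by
  constructor
  · calc ∑ k ∈ Finset.range (n + 1), (T n (2 * k) + T n (2 * k + 1))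
        = ∑ j ∈ Finset.range (2 * (n + 1)), T n j := sum_pairs (T n) (n + 1)
      _ = ∑ j ∈ Finset.range (n + 1), T n j := by
          symm
          apply Finset.sum_subset
          · apply Finset.range_subset_range.mpr
            omega
          · intro j _ hj
            rw [Finset.mem_range, not_lt] at hj
            rw [T_eq_N, N_eq_zero_of_lt (by omega)]
      _ = ∑ j ∈ Finset.range (n + 1), N n j := by
          apply Finset.sum_congr rfl
          intro j _
          exact T_eq_N n j
      _ = catalan n := N_total n
  · intro j hj1 hjn
    obtain ⟨s, rfl⟩ : ∃ s, n = s + j := ⟨n - j, by omega⟩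
    rw [show 2 * (s + j) - j = 2 * s + j by omega, T_eq_N]
    exact formula s j
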